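/- Let f(x,y) = p(y)x² + q(y)x + r(y) with p never zero (conformally flat strictly Walker metric). A smooth vector field X is a Ricci collineation of g_f if and only if X₃ = c₁/√|p(y)| for some constant c₁, with X₁, X₂ arbitrary smooth functions. -/

import Mathlib

noncomputable section

open Real

/-- Points of ℝ³ with coordinates (t,x,y). -/
abbrev Pt : Type := ℝ × ℝ × ℝ

/-- Partial derivative of a function on ℝ³ in the coordinate direction `i ∈ {∂_t,∂_x,∂_y}`. -/
def Dp (i : Fin 3) (F : Pt → ℝ) (p : Pt) : ℝ :=
  if i = 0 then deriv (fun s => F (s, p.2.1, p.2.2)) p.1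
  else if i = 1 then deriv (fun s => F (p.1, s, p.2.2)) p.2.1
  else deriv (fun s => F (p.1, p.2.1, s)) p.2.2

/-- Partial derivatives of the defining function f = f(x,y). -/
def fx (f : ℝ → ℝ → ℝ) (p : Pt) : ℝ := deriv (fun s => f s p.2.2) p.2.1
def fy (f : ℝ → ℝ → ℝ) (p : Pt) : ℝ := deriv (fun s => f p.2.1 s) p.2.2
def fxx (f : ℝ → ℝ → ℝ) (p : Pt) : ℝ := deriv (deriv (fun s => f s p.2.2)) p.2.1
def fxxx (f : ℝ → ℝ → ℝ) (p : Pt) : ℝ := deriv (deriv (deriv (fun s => f s p.2.2))) p.2.1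
def fxxy (f : ℝ → ℝ → ℝ) (p : Pt) : ℝ :=
  deriv (fun u => deriv (deriv (fun s => f s u)) p.2.1) p.2.2

/-- The Walker metric g_f in the coordinate frame {∂_t,∂_x,∂_y}. -/
def gmat (f : ℝ → ℝ → ℝ) (p : Pt) : Matrix (Fin 3) (Fin 3) ℝ :=
  !![0, 0, 1; 0, 1, 0; 1, 0, f p.2.1 p.2.2]

/-- The inverse metric. -/
def ginv (f : ℝ → ℝ → ℝ) (p : Pt) : Matrix (Fin 3) (Fin 3) ℝ := (gmat f p)⁻¹

/-- Christoffel symbols Γ^k_{ij} of the Levi-Civita connection of g_f. -/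
def Chr (f : ℝ → ℝ → ℝ) (k i j : Fin 3) (p : Pt) : ℝ :=
  (1/2) * ∑ l, ginv f p k l *
    (Dp i (fun q => gmat f q l j) p + Dp j (fun q => gmat f q l i) p
      - Dp l (fun q => gmat f q i j) p)

/-- Component l of R(∂_i,∂_j)∂_k, for the (1,3)-curvature R(X,Y)Z = [∇_X,∇_Y]Z − ∇_{[X,Y]}Z. -/
def Riem (f : ℝ → ℝ → ℝ) (l i j k : Fin 3) (p : Pt) : ℝ :=
  Dp i (fun q => Chr f l j k q) p - Dp j (fun q => Chr f l i k q) p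
    + ∑ m, (Chr f l i m p * Chr f m j k p - Chr f l j m p * Chr f m i k p)

/-- Ricci tensor ϱ(∂_i,∂_j) = trace of Z ↦ R(Z,∂_i)∂_j. -/
def Ric (f : ℝ → ℝ → ℝ) (i j : Fin 3) (p : Pt) : ℝ := ∑ l, Riem f l l i j p

/-- Scalar curvature τ = g^{ij} ϱ_{ij}. -/
def Scal (f : ℝ → ℝ → ℝ) (p : Pt) : ℝ := ∑ i, ∑ j, ginv f p i j * Ric f i j p

/-- Lie derivative of a (0,2)-tensor h along X:
 (L_X h)_{ij} = X^k ∂_k h_{ij} + h_{kj} ∂_i X^k + h_{ik} ∂_j X^k. -/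
def LieT (X : Pt → Fin 3 → ℝ) (h : Fin 3 → Fin 3 → Pt → ℝ) (i j : Fin 3) (p : Pt) : ℝ :=
  ∑ k, (X p k * Dp k (h i j) p + h k j p * Dp i (fun q => X q k) p
        + h i k p * Dp j (fun q => X q k) p)

/-- Lie derivative of the (1,3)-curvature tensor along X. -/
def LieR (f : ℝ → ℝ → ℝ) (X : Pt → Fin 3 → ℝ) (l i j k : Fin 3) (p : Pt) : ℝ :=
  ∑ m, (X p m * Dp m (fun q => Riem f l i j k q) p
        - Dp m (fun q => X q l) p * Riem f m i j k p
        + Dp i (fun q => X q m) p * Riem f l m j k p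
        + Dp j (fun q => X q m) p * Riem f l i m k p
        + Dp k (fun q => X q m) p * Riem f l i j m p)

/-- Lie derivative of the Levi-Civita connection along X (X is affine iff this vanishes). -/
def LieC (f : ℝ → ℝ → ℝ) (X : Pt → Fin 3 → ℝ) (k i j : Fin 3) (p : Pt) : ℝ :=
  Dp i (fun q => Dp j (fun q' => X q' k) q) p
    + ∑ m, (X p m * Dp m (fun q => Chr f k i j q) p
        - Chr f m i j p * Dp m (fun q => X q k) p
        + Chr f k m j p * Dp i (fun q => X q m) p
        + Chr f k i m p * Dp j (fun q => X q m) p)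

/-- A vector field X = X₁∂_t + X₂∂_x + X₃∂_y, given by components, is smooth. -/
def SmoothVF (X : Pt → Fin 3 → ℝ) : Prop := ∀ i, ContDiff ℝ (⊤ : ℕ∞) (fun p => X p i)

/-- Metric components as functions. -/
def gc (f : ℝ → ℝ → ℝ) (i j : Fin 3) (p : Pt) : ℝ := gmat f p i j

/-- Ricci components in the right argument order for LieT. -/
def Ricc (f : ℝ → ℝ → ℝ) (i j : Fin 3) : Pt → ℝ := fun p => Ric f i j p


lemma ginv_eq (f : ℝ → ℝ → ℝ) (p : Pt) :
    ginv f p = !![-(f p.2.1 p.2.2), 0, 1; 0, 1, 0; 1, 0, 0] := by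
  rw [ginv, Matrix.inv_eq_right_inv]
  ext i j
  fin_cases i <;> fin_cases j <;>
    simp [gmat, Matrix.mul_apply, Fin.sum_univ_three, Matrix.vecHead, Matrix.vecTail]
section Main
variable (P Q R : ℝ → ℝ)

/-- The quadratic f. -/
def FF : ℝ → ℝ → ℝ := fun x y => P y * x ^ 2 + Q y * x + R y

/-- Closed form of the Christoffel symbols. -/
def Gam (k i j : Fin 3) (p : Pt) : ℝ :=
  if k = 0 ∧ ((i = 1 ∧ j = 2) ∨ (i = 2 ∧ j = 1)) then P p.2.2 * p.2.1 + Q p.2.2 / 2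
  else if k = 0 ∧ i = 2 ∧ j = 2 then
    (deriv P p.2.2 * p.2.1 ^ 2 + deriv Q p.2.2 * p.2.1 + deriv R p.2.2) / 2
  else if k = 1 ∧ i = 2 ∧ j = 2 then -(P p.2.2 * p.2.1 + Q p.2.2 / 2)
  else 0

variable (hP : Differentiable ℝ P) (hQ : Differentiable ℝ Q) (hR : Differentiable ℝ R)

lemma hd1 (x y : ℝ) : deriv (fun s => P y * s ^ 2 + Q y * s + R y) x = 2 * P y * x + Q y := by
  have h : HasDerivAt (fun s : ℝ => P y * s ^ 2 + Q y * s + R y) (2 * P y * x + Q y) x := by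
    have := (((hasDerivAt_pow 2 x).const_mul (P y)).add
      ((hasDerivAt_id x).const_mul (Q y))).add_const (R y)
    exact this.congr_deriv (by push_cast; ring)
  exact h.deriv

include hP hQ hR in
lemma hd2 (x y : ℝ) : deriv (fun s => P s * x ^ 2 + Q s * x + R s) y
    = deriv P y * x ^ 2 + deriv Q y * x + deriv R y := by
  have h : HasDerivAt (fun s => P s * x ^ 2 + Q s * x + R s)
      (deriv P y * x ^ 2 + deriv Q y * x + deriv R y) y :=
    (((hP y).hasDerivAt.mul_const (x ^ 2)).add ((hQ y).hasDerivAt.mul_const x)).add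
      (hR y).hasDerivAt
  exact h.deriv

include hP hQ hR in
lemma chr_eq (k i j : Fin 3) (p : Pt) : Chr (FF P Q R) k i j p = Gam P Q R k i j p := by
  fin_cases k <;> fin_cases i <;> fin_cases j <;>
    simp [Chr, ginv_eq, Dp, gmat, FF, Gam, Fin.sum_univ_three, hd1, hd2 P Q R hP hQ hR,
      Matrix.vecHead, Matrix.vecTail] <;> ring

end Main
section Main2
variable (P Q R : ℝ → ℝ)
variable (hP : Differentiable ℝ P) (hQ : Differentiable ℝ Q) (hR : Differentiable ℝ R)

include hP hQ hR in
lemma chr_funext (k i j : Fin 3) :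
    (fun q => Chr (FF P Q R) k i j q) = fun q => Gam P Q R k i j q :=
  funext (chr_eq P Q R hP hQ hR k i j)

lemma hd3 (x y : ℝ) : deriv (fun s => P y * s + Q y / 2) x = P y := by
  have h : HasDerivAt (fun s : ℝ => P y * s + Q y / 2) (P y) x := by
    simpa using ((hasDerivAt_id x).const_mul (P y)).add_const (Q y / 2)
  exact h.deriv

lemma hd3n (x y : ℝ) : deriv (fun s => -(P y * s + Q y / 2)) x = -P y := by
  have h : HasDerivAt (fun s : ℝ => -(P y * s + Q y / 2)) (-P y) x := by
    simpa [Pi.neg_def] using (((hasDerivAt_id x).const_mul (P y)).add_const (Q y / 2)).neg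
  exact h.deriv

lemma hd4 (a x : ℝ) : deriv (fun s : ℝ => a * s) x = a := by
  simpa using ((hasDerivAt_id x).const_mul a).deriv

include hP hQ hR in
lemma ric_eq (i j : Fin 3) (p : Pt) :
    Ric (FF P Q R) i j p = if i = 2 ∧ j = 2 then -P p.2.2 else 0 := by
  simp only [Ric, Riem, chr_funext P Q R hP hQ hR]
  fin_cases i <;> fin_cases j <;>
    simp [Gam, Dp, Fin.sum_univ_three, hd3, hd3n, hd4] <;> ring

end Main2
section Main3
variable (P Q R : ℝ → ℝ)
variable (hP : Differentiable ℝ P) (hQ : Differentiable ℝ Q) (hR : Differentiable ℝ R)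

include hP hQ hR in
lemma ricc_funext (i j : Fin 3) :
    Ricc (FF P Q R) i j = fun p => if i = 2 ∧ j = 2 then -P p.2.2 else 0 :=
  funext fun p => ric_eq P Q R hP hQ hR i j p

include hP hQ hR in
lemma lie_key (X : Pt → Fin 3 → ℝ) :
    (∀ (i j : Fin 3) (p : Pt), LieT X (Ricc (FF P Q R)) i j p = 0) ↔
    (∀ p : Pt, (-P p.2.2) * Dp 0 (fun q => X q 2) p = 0 ∧
       (-P p.2.2) * Dp 1 (fun q => X q 2) p = 0 ∧
       X p 2 * (-deriv P p.2.2) + 2 * (-P p.2.2) * Dp 2 (fun q => X q 2) p = 0) := by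
  have hderivP : ∀ t : ℝ, deriv (fun s => -P s) t = -deriv P t := by
    intro t; exact deriv.neg
  constructor
  · intro h p
    refine ⟨?_, ?_, ?_⟩
    · have := h 0 2 p
      simp only [LieT, ricc_funext P Q R hP hQ hR, Fin.sum_univ_three] at this
      simpa [Dp, hderivP] using this
    · have := h 1 2 p
      simp only [LieT, ricc_funext P Q R hP hQ hR, Fin.sum_univ_three] at this
      simpa [Dp, hderivP] using this
    · have := h 2 2 p
      simp only [LieT, ricc_funext P Q R hP hQ hR, Fin.sum_univ_three] at this
      simp [Dp, hderivP, -mul_eq_zero] at this ⊢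
      linarith
  · intro h i j p
    obtain ⟨h0, h1, h2⟩ := h p
    simp only [LieT, ricc_funext P Q R hP hQ hR, Fin.sum_univ_three]
    simp [Dp, -mul_eq_zero] at h0 h1 h2
    fin_cases i <;> fin_cases j <;>
      simp [Dp, hderivP, -mul_eq_zero] <;> linarith

end Main3
lemma sign_const (P : ℝ → ℝ) (hPc : Continuous P) (hP0 : ∀ y, P y ≠ 0) :
    (∀ y, 0 < P y) ∨ (∀ y, P y < 0) := by
  rcases (hP0 0).lt_or_gt with h | h
  · right; intro y
    by_contra hy
    push_neg at hy
    have h0y : (0:ℝ) ∈ Set.uIcc (P 0) (P y) := by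
      rw [Set.mem_uIcc]; left; exact ⟨h.le, hy⟩
    obtain ⟨c, _, hc⟩ := intermediate_value_uIcc hPc.continuousOn h0y
    exact hP0 c hc
  · left; intro y
    by_contra hy
    push_neg at hy
    have h0y : (0:ℝ) ∈ Set.uIcc (P 0) (P y) := by
      rw [Set.mem_uIcc]; right; exact ⟨hy, h.le⟩
    obtain ⟨c, _, hc⟩ := intermediate_value_uIcc hPc.continuousOn h0y
    exact hP0 c hc

/-- for f(x,y) = p(y)x² + q(y)x + r(y) with p never zero, X is a Ricci
collineation of g_f iff X₃ = c₁/√|p(y)| for some constant c₁, with X₁, X₂ arbitrary. -/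
theorem stmt_19 (P Q R : ℝ → ℝ)
    (hP : ContDiff ℝ (⊤ : ℕ∞) P) (hQ : ContDiff ℝ (⊤ : ℕ∞) Q) (hR : ContDiff ℝ (⊤ : ℕ∞) R)
    (hP0 : ∀ y : ℝ, P y ≠ 0)
    (X : Pt → Fin 3 → ℝ) (hX : SmoothVF X) :
    (∀ (i j : Fin 3) (p : Pt),
        LieT X (Ricc (fun x y => P y * x ^ 2 + Q y * x + R y)) i j p = 0) ↔
    ∃ c₁ : ℝ, ∀ p : Pt, X p 2 = c₁ / Real.sqrt |P p.2.2| := by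
  have hP' : Differentiable ℝ P := hP.differentiable (by simp)
  have hQ' : Differentiable ℝ Q := hQ.differentiable (by simp)
  have hR' : Differentiable ℝ R := hR.differentiable (by simp)
  have hFF : (fun x y => P y * x ^ 2 + Q y * x + R y) = FF P Q R := rfl
  rw [hFF, lie_key P Q R hP' hQ' hR' X]
  obtain ⟨ε, hε1, hpos⟩ : ∃ ε : ℝ, (ε = 1 ∨ ε = -1) ∧ ∀ y, 0 < ε * P y := by
    rcases sign_const P hP.continuous hP0 with h | h
    · exact ⟨1, Or.inl rfl, fun y => by simpa using h y⟩
    · exact ⟨-1, Or.inr rfl, fun y => by simpa using h y⟩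
  have hε2 : ε ^ 2 = 1 := by rcases hε1 with rfl | rfl <;> norm_num
  have habs : ∀ y, |P y| = ε * P y := by
    intro y
    rcases hε1 with rfl | rfl
    · have h1 := hpos y; rw [one_mul] at h1; simp [abs_of_pos h1]
    · have : P y < 0 := by nlinarith [hpos y]
      simp [abs_of_neg this]
  have hsq : ∀ y, Real.sqrt (ε * P y) ^ 2 = ε * P y := fun y => Real.sq_sqrt (hpos y).le
  have hs0 : ∀ y, Real.sqrt (ε * P y) ≠ 0 := fun y => (Real.sqrt_pos.mpr (hpos y)).ne'
  have hsqrtD : ∀ y, HasDerivAt (fun s => Real.sqrt (ε * P s))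
      (1 / (2 * Real.sqrt (ε * P y)) * (ε * deriv P y)) y := by
    intro y
    exact (Real.hasDerivAt_sqrt (hpos y).ne').comp y ((hP' y).hasDerivAt.const_mul ε)
  constructor
  · intro h
    have hd0 : ∀ p : Pt, deriv (fun s => X (s, p.2.1, p.2.2) 2) p.1 = 0 := by
      intro p
      have := (mul_eq_zero.mp ((h p).1)).resolve_left (neg_ne_zero.mpr (hP0 p.2.2))
      simpa [Dp] using this
    have hd1 : ∀ p : Pt, deriv (fun s => X (p.1, s, p.2.2) 2) p.2.1 = 0 := by
      intro p
      have := (mul_eq_zero.mp ((h p).2.1)).resolve_left (neg_ne_zero.mpr (hP0 p.2.2))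
      simpa [Dp] using this
    have hODE : ∀ p : Pt, X p 2 * deriv P p.2.2
        + 2 * P p.2.2 * deriv (fun s => X (p.1, p.2.1, s) 2) p.2.2 = 0 := by
      intro p
      have := (h p).2.2
      simp [Dp, -mul_eq_zero] at this
      linarith
    have hXsm := hX 2
    have sl_t : ∀ x y : ℝ, Differentiable ℝ (fun s => X (s, x, y) 2) := fun x y =>
      (hXsm.comp (contDiff_id.prodMk contDiff_const)).differentiable (by simp)
    have sl_x : ∀ t y : ℝ, Differentiable ℝ (fun s => X (t, s, y) 2) := fun t y =>
      (hXsm.comp (contDiff_const.prodMk (contDiff_id.prodMk contDiff_const))).differentiable (by simp)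
    have sl_y : ∀ t x : ℝ, Differentiable ℝ (fun s => X (t, x, s) 2) := fun t x =>
      (hXsm.comp (contDiff_const.prodMk (contDiff_const.prodMk contDiff_id))).differentiable (by simp)
    set w : ℝ → ℝ := fun y => X (0, 0, y) 2 with hw
    have hXw : ∀ p : Pt, X p 2 = w p.2.2 := by
      intro p
      have e1 : X (p.1, p.2.1, p.2.2) 2 = X (0, p.2.1, p.2.2) 2 :=
        is_const_of_deriv_eq_zero (sl_t p.2.1 p.2.2) (fun s => hd0 (s, p.2.1, p.2.2)) p.1 0
      have e2 : X (0, p.2.1, p.2.2) 2 = X (0, 0, p.2.2) 2 :=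
        is_const_of_deriv_eq_zero (sl_x 0 p.2.2) (fun s => hd1 (0, s, p.2.2)) p.2.1 0
      calc X p 2 = X (p.1, p.2.1, p.2.2) 2 := rfl
        _ = X (0, p.2.1, p.2.2) 2 := e1
        _ = w p.2.2 := e2
    have hwdiff : Differentiable ℝ w := sl_y 0 0
    have hwder : ∀ y, w y * deriv P y + 2 * P y * deriv w y = 0 := fun y => hODE (0, 0, y)
    set hfun : ℝ → ℝ := fun y => Real.sqrt (ε * P y) * w y with hhf
    have hder : ∀ y, HasDerivAt hfun
        (1 / (2 * Real.sqrt (ε * P y)) * (ε * deriv P y) * w y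
          + Real.sqrt (ε * P y) * deriv w y) y := fun y =>
      (hsqrtD y).mul (hwdiff y).hasDerivAt
    have hder0 : ∀ y, deriv hfun y = 0 := by
      intro y
      rw [(hder y).deriv]
      have e := hwder y
      have hs := hs0 y
      have hq := hsq y
      field_simp
      linear_combination ε * e + 2 * deriv w y * hq
    refine ⟨hfun 0, fun p => ?_⟩
    rw [hXw p, habs, eq_div_iff (hs0 p.2.2)]
    have := is_const_of_deriv_eq_zero (fun y => (hder y).differentiableAt) hder0 p.2.2 0
    rw [← this, hhf]; ring
  · rintro ⟨c₁, hc⟩ p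
    have hXfun : ∀ t x y : ℝ, X (t, x, y) 2 = c₁ / Real.sqrt (ε * P y) := by
      intro t x y
      rw [hc (t, x, y)]
      simp [habs]
    have e0 : (fun s => X (s, p.2.1, p.2.2) 2) = fun _ => c₁ / Real.sqrt (ε * P p.2.2) :=
      funext fun s => hXfun s _ _
    have e1 : (fun s => X (p.1, s, p.2.2) 2) = fun _ => c₁ / Real.sqrt (ε * P p.2.2) :=
      funext fun s => hXfun _ s _
    have e2 : (fun s => X (p.1, p.2.1, s) 2) = fun s => c₁ / Real.sqrt (ε * P s) :=
      funext fun s => hXfun _ _ s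
    refine ⟨?_, ?_, ?_⟩
    · simp [Dp, e0]
    · simp [Dp, e1]
    · have hdiv : HasDerivAt (fun s => c₁ / Real.sqrt (ε * P s))
          ((0 * Real.sqrt (ε * P p.2.2)
            - c₁ * (1 / (2 * Real.sqrt (ε * P p.2.2)) * (ε * deriv P p.2.2)))
            / Real.sqrt (ε * P p.2.2) ^ 2) p.2.2 :=
        (hasDerivAt_const p.2.2 c₁).div (hsqrtD p.2.2) (hs0 p.2.2)
      have hs := hs0 p.2.2
      have hq := hsq p.2.2
      have hD : Dp 2 (fun q => X q 2) p
          = (0 * Real.sqrt (ε * P p.2.2)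
            - c₁ * (1 / (2 * Real.sqrt (ε * P p.2.2)) * (ε * deriv P p.2.2)))
            / Real.sqrt (ε * P p.2.2) ^ 2 := by
        simp only [Dp]
        rw [if_neg (by decide), if_neg (by decide), e2, hdiv.deriv]
      rw [hD, hc p, habs]
      field_simp
      linear_combination (-c₁ * deriv P p.2.2) * hq
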